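/- Let ε > 0, let b ≥ 1 be an integer, and let V be a finite set of multi-unit valuations on m items that is single-crossing with respect to a total order ≻, such that for every v ∈ V and every s, the value v(s) is either 0 or lies in the interval [2^{−b}, 2^{b}]. Then there exists a set K ⊆ {0,1,…,m} with 0 ∈ K and |K| ≤ 1 + (1 + log_{1+ε/2}(2^{2b}))² such that: (1) for every v ∈ V and every s ∈ {0,…,m}, 0 ≤ v(s) − v^K(s) ≤ ε·v(m); and (2) for every v̄ ≻ v in V and all quantities s̄ > s in {0,…,m}, v̄^K(s̄) − v̄^K(s) ≥ v^K(s̄) − v^K(s), i.e., the set of projections V^K = { v^K : v ∈ V } is single-crossing with the inherited order. -/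
import Mathlib


/-- Projection of a multi-unit valuation `v` onto a set of quantities `K`
(containing `0`): `v^K(s) = max { v(x) : x ∈ K, x ≤ s }`. -/
noncomputable def proj (K : Finset ℕ) (v : ℕ → ℝ) (s : ℕ) : ℝ :=
  sSup (v '' {x | x ∈ K ∧ x ≤ s})

private lemma two_zpow_mul_pow (b : ℕ) : (2:ℝ)^(-(b:ℤ)) * 2^b = 1 := by
  rw [zpow_neg, zpow_natCast]
  exact inv_mul_cancel₀ (by positivity)

/-- geometric thresholds -/
noncomputable def tauF (ε : ℝ) (b : ℕ) (j : ℕ) : ℝ := (2:ℝ)^(-(b:ℤ)) * (1+ε/2)^j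

/-- level of a value -/
noncomputable def lvlF (ε : ℝ) (b : ℕ) (y : ℝ) : ℕ := ⌊Real.logb (1+ε/2) (y * 2^b)⌋₊

lemma tauF_succ (ε : ℝ) (b j : ℕ) : tauF ε b (j+1) = (1+ε/2) * tauF ε b j := by
  unfold tauF; ring

lemma lvlF_le (ε : ℝ) (hε : 0 < ε) {b : ℕ} {y : ℝ} (hy : (2:ℝ)^(-(b:ℤ)) ≤ y) :
    tauF ε b (lvlF ε b y) ≤ y := by
  have hB : (1:ℝ) < 1 + ε/2 := by linarith
  have hz1 : (1:ℝ) ≤ y * 2^b := by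
    calc (1:ℝ) = 2^(-(b:ℤ)) * 2^b := (two_zpow_mul_pow b).symm
    _ ≤ y * 2^b := mul_le_mul_of_nonneg_right hy (by positivity)
  have hz0 : (0:ℝ) < y * 2^b := by linarith
  have h1 : ((lvlF ε b y : ℝ)) ≤ Real.logb (1+ε/2) (y*2^b) :=
    Nat.floor_le (Real.logb_nonneg hB hz1)
  have h2 : (1+ε/2)^(lvlF ε b y) ≤ y * 2^b := by
    calc (1+ε/2)^(lvlF ε b y) = (1+ε/2) ^ ((lvlF ε b y : ℝ)) := (Real.rpow_natCast _ _).symm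
    _ ≤ (1+ε/2) ^ (Real.logb (1+ε/2) (y*2^b)) := Real.rpow_le_rpow_of_exponent_le hB.le h1
    _ = y * 2^b := Real.rpow_logb (by linarith) (ne_of_gt hB) hz0
  have h3 := mul_le_mul_of_nonneg_left h2
    (le_of_lt (show (0:ℝ) < 2^(-(b:ℤ)) by positivity))
  calc tauF ε b (lvlF ε b y) = 2^(-(b:ℤ)) * (1+ε/2)^(lvlF ε b y) := rfl
  _ ≤ 2^(-(b:ℤ)) * (y * 2^b) := h3
  _ = y * (2^(-(b:ℤ)) * 2^b) := by ring
  _ = y := by rw [two_zpow_mul_pow]; ring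

lemma lvlF_gt (ε : ℝ) (hε : 0 < ε) {b : ℕ} {y : ℝ} (hy : (2:ℝ)^(-(b:ℤ)) ≤ y) :
    y < tauF ε b (lvlF ε b y + 1) := by
  have hB : (1:ℝ) < 1 + ε/2 := by linarith
  have hz0 : (0:ℝ) < y * 2^b := by
    have : (0:ℝ) < (2:ℝ)^(-(b:ℤ)) := by positivity
    have hy0 : 0 < y := lt_of_lt_of_le this hy
    positivity
  have h2 : y * 2^b < (1+ε/2)^(lvlF ε b y + 1) := by
    calc y * 2^b = (1+ε/2) ^ (Real.logb (1+ε/2) (y*2^b)) :=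
          (Real.rpow_logb (by linarith) (ne_of_gt hB) hz0).symm
    _ < (1+ε/2) ^ (((lvlF ε b y + 1 : ℕ) : ℝ)) := by
          apply Real.rpow_lt_rpow_of_exponent_lt hB
          push_cast
          exact Nat.lt_floor_add_one _
    _ = (1+ε/2)^(lvlF ε b y + 1) := Real.rpow_natCast _ _
  have h3 := mul_lt_mul_of_pos_left h2 (show (0:ℝ) < 2^(-(b:ℤ)) by positivity)
  calc y = y * (2^(-(b:ℤ)) * 2^b) := by rw [two_zpow_mul_pow]; ring
  _ = 2^(-(b:ℤ)) * (y * 2^b) := by ring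
  _ < 2^(-(b:ℤ)) * (1+ε/2)^(lvlF ε b y + 1) := h3
  _ = tauF ε b (lvlF ε b y + 1) := rfl

lemma lvlF_le_floor (ε : ℝ) (hε : 0 < ε) {b : ℕ} {y : ℝ} (hy0 : 0 < y) (hy : y ≤ 2^b) :
    lvlF ε b y ≤ ⌊Real.logb (1+ε/2) ((2:ℝ)^(2*b))⌋₊ := by
  have hB : (1:ℝ) < 1 + ε/2 := by linarith
  apply Nat.floor_mono
  apply Real.logb_le_logb_of_le hB (by positivity)
  calc y * 2^b ≤ 2^b * 2^b := mul_le_mul_of_nonneg_right hy (by positivity)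
  _ = (2:ℝ)^(2*b) := by rw [two_mul, pow_add]

/-- first quantity where `v` reaches value `τ` (within `[0,m]`). -/
noncomputable def crossPt (m : ℕ) (τ : ℝ) (v : ℕ → ℝ) : ℕ := sInf {s | s ≤ m ∧ τ ≤ v s}

lemma crossPt_le_m (m : ℕ) (τ : ℝ) (v : ℕ → ℝ) : crossPt m τ v ≤ m := by
  by_cases h : {s | s ≤ m ∧ τ ≤ v s}.Nonempty
  · exact (Nat.sInf_mem h).1
  · rw [Set.not_nonempty_iff_eq_empty] at h
    simp [crossPt, h]

open Classical in
/-- bucket of valuations by top-value level -/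
noncomputable def bucketF {ι : Type*} [Fintype ι] (ε : ℝ) (b m : ℕ) (val : ι → ℕ → ℝ)
    (k : ℕ) : Finset ι :=
  Finset.univ.filter (fun i => 0 < val i m ∧ lvlF ε b (val i m) = k)

lemma mem_bucketF {ι : Type*} [Fintype ι] (ε : ℝ) (b m : ℕ) (val : ι → ℕ → ℝ)
    (k : ℕ) (i : ι) : i ∈ bucketF ε b m val k ↔ 0 < val i m ∧ lvlF ε b (val i m) = k := by
  simp [bucketF]

open Classical in
/-- chosen crossing points -/
noncomputable def cptF {ι : Type*} [Fintype ι] [LinearOrder ι] (ε : ℝ) (b m : ℕ)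
    (val : ι → ℕ → ℝ) (k j : ℕ) : ℕ :=
  if h : (bucketF ε b m val k).Nonempty then
    crossPt m (tauF ε b j) (val ((bucketF ε b m val k).max' h)) else 0

lemma projRep (K : Finset ℕ) (h0 : 0 ∈ K) (m : ℕ) (hKm : ∀ x ∈ K, x ≤ m)
    (v : ℕ → ℝ) (hmono : ∀ s t : ℕ, s ≤ t → t ≤ m → v s ≤ v t) (s : ℕ) (hs : s ≤ m) :
    proj K v s = v ((K.filter (fun x => x ≤ s)).max'
      ⟨0, Finset.mem_filter.mpr ⟨h0, Nat.zero_le s⟩⟩) := by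
  classical
  set F := K.filter (fun x => x ≤ s) with hF
  have hFne : F.Nonempty := ⟨0, Finset.mem_filter.mpr ⟨h0, Nat.zero_le s⟩⟩
  have hset : v '' {x | x ∈ K ∧ x ≤ s} = ↑(F.image v) := by
    ext y
    simp [hF, Finset.mem_filter, Set.mem_image]
  have hne' : (F.image v).Nonempty := hFne.image v
  rw [proj, hset, hne'.csSup_eq_max']
  apply le_antisymm
  · apply Finset.max'_le
    intro y hy
    obtain ⟨x, hx, rfl⟩ := Finset.mem_image.mp hy
    have hmax := Finset.max'_mem F hFne
    obtain ⟨hmK, hms⟩ := Finset.mem_filter.mp hmax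
    exact hmono _ _ (Finset.le_max' F x hx) (hKm _ hmK)
  · exact Finset.le_max' _ _ (Finset.mem_image_of_mem v (Finset.max'_mem F hFne))

lemma proj_bounds (K : Finset ℕ) (h0 : 0 ∈ K) (m : ℕ) (hKm : ∀ x ∈ K, x ≤ m)
    (v : ℕ → ℝ) (hv0 : v 0 = 0) (hmono : ∀ s t : ℕ, s ≤ t → t ≤ m → v s ≤ v t)
    (s : ℕ) (hs : s ≤ m) : proj K v s ≤ v s ∧ 0 ≤ proj K v s := by
  rw [projRep K h0 m hKm v hmono s hs]
  have hmem := Finset.max'_mem (K.filter (fun x => x ≤ s))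
    ⟨0, Finset.mem_filter.mpr ⟨h0, Nat.zero_le s⟩⟩
  obtain ⟨hK', hs'⟩ := Finset.mem_filter.mp hmem
  constructor
  · exact hmono _ _ hs' hs
  · rw [← hv0]
    exact hmono _ _ (Nat.zero_le _) (hKm _ hK')

lemma proj_sc_aux {ι : Type*} [LinearOrder ι] (m : ℕ) (val : ι → ℕ → ℝ)
    (hvmono : ∀ i, ∀ s t : ℕ, s ≤ t → t ≤ m → val i s ≤ val i t)
    (hsc : ∀ i i' : ι, i < i' → ∀ s t : ℕ, s < t → t ≤ m →
      val i t - val i s ≤ val i' t - val i' s)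
    (K : Finset ℕ) (h0 : 0 ∈ K) (hKm : ∀ x ∈ K, x ≤ m) :
    ∀ i i' : ι, i < i' → ∀ s t : ℕ, s < t → t ≤ m →
      proj K (val i) t - proj K (val i) s ≤ proj K (val i') t - proj K (val i') s := by
  intro i i' hii s t hst htm
  have hsm : s ≤ m := le_trans hst.le htm
  rw [projRep K h0 m hKm (val i) (hvmono i) s hsm,
      projRep K h0 m hKm (val i) (hvmono i) t htm,
      projRep K h0 m hKm (val i') (hvmono i') s hsm,
      projRep K h0 m hKm (val i') (hvmono i') t htm]
  set rs := (K.filter (fun x => x ≤ s)).max'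
    ⟨0, Finset.mem_filter.mpr ⟨h0, Nat.zero_le s⟩⟩ with hrs
  set rt := (K.filter (fun x => x ≤ t)).max'
    ⟨0, Finset.mem_filter.mpr ⟨h0, Nat.zero_le t⟩⟩ with hrt
  have hrsmem := Finset.max'_mem (K.filter (fun x => x ≤ s))
    ⟨0, Finset.mem_filter.mpr ⟨h0, Nat.zero_le s⟩⟩
  have hrtmem := Finset.max'_mem (K.filter (fun x => x ≤ t))
    ⟨0, Finset.mem_filter.mpr ⟨h0, Nat.zero_le t⟩⟩
  have hrr : rs ≤ rt := by
    apply Finset.le_max'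
    exact Finset.mem_filter.mpr ⟨(Finset.mem_filter.mp hrsmem).1,
      le_trans (Finset.mem_filter.mp hrsmem).2 hst.le⟩
  have hrtm : rt ≤ m := hKm _ (Finset.mem_filter.mp hrtmem).1
  rcases eq_or_lt_of_le hrr with h | h
  · rw [h]; simp
  · exact hsc i i' hii rs rt h hrtm

lemma val_le_val {ι : Type*} [LinearOrder ι] (m : ℕ) (val : ι → ℕ → ℝ)
    (hv0 : ∀ i, val i 0 = 0)
    (hsc : ∀ i i' : ι, i < i' → ∀ s t : ℕ, s < t → t ≤ m →
      val i t - val i s ≤ val i' t - val i' s)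
    {i i' : ι} (h : i ≤ i') (s : ℕ) (hs : s ≤ m) : val i s ≤ val i' s := by
  rcases lt_or_eq_of_le h with h | h
  · rcases Nat.eq_zero_or_pos s with rfl | hpos
    · rw [hv0, hv0]
    · have h2 := hsc i i' h 0 s hpos hs
      rw [hv0, hv0] at h2
      linarith
  · rw [h]

theorem exists_value_restricted_sketch
    (ε : ℝ) (hε : 0 < ε) (b : ℕ) (hb : 1 ≤ b) (m : ℕ)
    {ι : Type*} [Fintype ι] [LinearOrder ι]
    (val : ι → ℕ → ℝ)
    (hv0 : ∀ i, val i 0 = 0)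
    (hvmono : ∀ i, ∀ s t : ℕ, s ≤ t → t ≤ m → val i s ≤ val i t)
    (hrange : ∀ i, ∀ s : ℕ, s ≤ m →
      val i s = 0 ∨ ((2 : ℝ) ^ (-(b : ℤ)) ≤ val i s ∧ val i s ≤ 2 ^ (b : ℕ)))
    (hsc : ∀ i i' : ι, i < i' → ∀ s t : ℕ, s < t → t ≤ m →
      val i t - val i s ≤ val i' t - val i' s) :
    ∃ K : Finset ℕ, (∀ x ∈ K, x ≤ m) ∧ 0 ∈ K ∧
      (K.card : ℝ) ≤ 1 + (1 + Real.logb (1 + ε / 2) ((2 : ℝ) ^ (2 * b))) ^ 2 ∧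
      (∀ i, ∀ s : ℕ, s ≤ m →
        0 ≤ val i s - proj K (val i) s ∧ val i s - proj K (val i) s ≤ ε * val i m) ∧
      (∀ i i' : ι, i < i' → ∀ s t : ℕ, s < t → t ≤ m →
        proj K (val i) t - proj K (val i) s ≤ proj K (val i') t - proj K (val i') s) := by
  classical
  have hvm0 : ∀ i, (0:ℝ) ≤ val i m := fun i => by
    have h := hvmono i 0 m (Nat.zero_le m) le_rfl
    rw [hv0] at h; exact h
  rcases le_total 1 ε with hε1 | hε1
  · -- ε ≥ 1 : take K = {0}
    have h0 : (0:ℕ) ∈ ({0} : Finset ℕ) := Finset.mem_singleton_self 0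
    have hKm : ∀ x ∈ ({0} : Finset ℕ), x ≤ m := by
      intro x hx; rw [Finset.mem_singleton] at hx; omega
    refine ⟨{0}, hKm, h0, ?_, ?_, proj_sc_aux m val hvmono hsc _ h0 hKm⟩
    · rw [Finset.card_singleton]
      nlinarith [sq_nonneg (1 + Real.logb (1+ε/2) ((2:ℝ)^(2*b)))]
    · intro i s hs
      obtain ⟨hle, hnn⟩ := proj_bounds {0} h0 m hKm (val i) (hv0 i) (hvmono i) s hs
      have h1 : val i s ≤ val i m := hvmono i s m hs le_rfl
      have h2 := mul_le_mul_of_nonneg_right hε1 (hvm0 i)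
      constructor
      · linarith
      · linarith
  · -- ε ≤ 1 : the real construction
    set L := ⌊Real.logb (1+ε/2) ((2:ℝ)^(2*b))⌋₊ with hL
    set Kb : Finset ℕ := insert 0 (((Finset.range (L+1)) ×ˢ (Finset.range (L+1))).image
      (fun p => cptF ε b m val p.1 p.2)) with hKb
    have h0K : (0:ℕ) ∈ Kb := Finset.mem_insert_self _ _
    have hKm : ∀ x ∈ Kb, x ≤ m := by
      intro x hx
      rw [hKb] at hx
      rcases Finset.mem_insert.mp hx with h | h
      · omega
      · obtain ⟨p, _, rfl⟩ := Finset.mem_image.mp h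
        unfold cptF
        split
        · exact crossPt_le_m _ _ _
        · omega
    refine ⟨Kb, hKm, h0K, ?_, ?_, proj_sc_aux m val hvmono hsc _ h0K hKm⟩
    · -- cardinality
      have h1 : Kb.card ≤ (L+1)*(L+1) + 1 := by
        rw [hKb]
        calc (insert 0 (((Finset.range (L+1)) ×ˢ (Finset.range (L+1))).image
            (fun p => cptF ε b m val p.1 p.2))).card
            ≤ (((Finset.range (L+1)) ×ˢ (Finset.range (L+1))).image
            (fun p => cptF ε b m val p.1 p.2)).card + 1 := Finset.card_insert_le _ _
        _ ≤ ((Finset.range (L+1)) ×ˢ (Finset.range (L+1))).card + 1 := by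
            have := Finset.card_image_le (s := (Finset.range (L+1)) ×ˢ (Finset.range (L+1)))
              (f := fun p => cptF ε b m val p.1 p.2)
            omega
        _ = (L+1)*(L+1) + 1 := by rw [Finset.card_product, Finset.card_range]
      have hB : (1:ℝ) < 1 + ε/2 := by linarith
      have h2b1 : (1:ℝ) ≤ (2:ℝ)^(2*b) := by
        calc (1:ℝ) = 1^(2*b) := (one_pow _).symm
        _ ≤ (2:ℝ)^(2*b) := pow_le_pow_left₀ (by norm_num) (by norm_num) _
      have hLle : (L:ℝ) ≤ Real.logb (1+ε/2) ((2:ℝ)^(2*b)) := by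
        rw [hL]; exact Nat.floor_le (Real.logb_nonneg hB h2b1)
      have h2 : ((L:ℝ)+1) ≤ 1 + Real.logb (1+ε/2) ((2:ℝ)^(2*b)) := by linarith
      have h3 := pow_le_pow_left₀ (by positivity : (0:ℝ) ≤ (L:ℝ)+1) h2 2
      calc (Kb.card : ℝ) ≤ (((L+1)*(L+1) + 1 : ℕ) : ℝ) := by exact_mod_cast h1
      _ = 1 + ((L:ℝ)+1)^2 := by push_cast; ring
      _ ≤ 1 + (1 + Real.logb (1+ε/2) ((2:ℝ)^(2*b)))^2 := by linarith
    · -- approximation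
      intro i s hs
      obtain ⟨hproj_le, hproj_nn⟩ := proj_bounds Kb h0K m hKm (val i) (hv0 i) (hvmono i) s hs
      refine ⟨by linarith, ?_⟩
      by_cases hs0 : val i s = 0
      · have h1 : 0 ≤ ε * val i m := mul_nonneg hε.le (hvm0 i)
        linarith [hs0, hproj_nn]
      · obtain ⟨hτ0s, hs2b⟩ := (hrange i s hs).resolve_left hs0
        have hpos_s : 0 < val i s := lt_of_lt_of_le (by positivity) hτ0s
        have hpos_m : 0 < val i m := lt_of_lt_of_le hpos_s (hvmono i s m hs le_rfl)
        set k := lvlF ε b (val i m) with hk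
        have hibk : i ∈ bucketF ε b m val k := (mem_bucketF ε b m val k i).mpr ⟨hpos_m, rfl⟩
        have hne : (bucketF ε b m val k).Nonempty := ⟨i, hibk⟩
        set i2 := (bucketF ε b m val k).max' hne with hi2
        have hii2 : i ≤ i2 := Finset.le_max' _ _ hibk
        obtain ⟨hpos2, hlvl2⟩ := (mem_bucketF ε b m val k i2).mp (Finset.max'_mem _ hne)
        have hpw : val i s ≤ val i2 s := val_le_val m val hv0 hsc hii2 s hs
        have hτ0s2 : (2:ℝ)^(-(b:ℤ)) ≤ val i2 s := le_trans hτ0s hpw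
        have hpos_s2 : 0 < val i2 s := lt_of_lt_of_le hpos_s hpw
        have hs2b2 : val i2 s ≤ 2^b := ((hrange i2 s hs).resolve_left (ne_of_gt hpos_s2)).2
        set j := lvlF ε b (val i2 s) with hj
        have hτj : tauF ε b j ≤ val i2 s := lvlF_le ε hε hτ0s2
        have hτj1 : val i2 s < tauF ε b (j+1) := lvlF_gt ε hε hτ0s2
        have hjL : j ≤ L := by rw [hL]; exact lvlF_le_floor ε hε hpos_s2 hs2b2
        have hm2b : val i m ≤ 2^b := ((hrange i m le_rfl).resolve_left (ne_of_gt hpos_m)).2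
        have hkL : k ≤ L := by rw [hL]; exact lvlF_le_floor ε hε hpos_m hm2b
        have hSne : {s' | s' ≤ m ∧ tauF ε b j ≤ val i2 s'}.Nonempty := ⟨s, hs, hτj⟩
        set x := crossPt m (tauF ε b j) (val i2) with hx
        have hxmem : x ≤ m ∧ tauF ε b j ≤ val i2 x := Nat.sInf_mem hSne
        have hxs : x ≤ s := Nat.sInf_le ⟨hs, hτj⟩
        have hxK : x ∈ Kb := by
          rw [hKb]
          refine Finset.mem_insert_of_mem (Finset.mem_image.mpr ⟨(k, j), ?_, ?_⟩)
          · exact Finset.mem_product.mpr ⟨Finset.mem_range.mpr (by omega),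
              Finset.mem_range.mpr (by omega)⟩
          · show cptF ε b m val k j = x
            unfold cptF
            rw [dif_pos hne, hx, hi2]
        rw [projRep Kb h0K m hKm (val i) (hvmono i) s hs]
        set r := (Kb.filter (fun x => x ≤ s)).max'
          ⟨0, Finset.mem_filter.mpr ⟨h0K, Nat.zero_le s⟩⟩ with hr
        have hrmem := Finset.max'_mem (Kb.filter (fun x => x ≤ s))
          ⟨0, Finset.mem_filter.mpr ⟨h0K, Nat.zero_le s⟩⟩
        have hrm : r ≤ m := hKm r (Finset.mem_filter.mp hrmem).1
        have hxr : x ≤ r := by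
          rw [hr]
          apply Finset.le_max'
          exact Finset.mem_filter.mpr ⟨hxK, hxs⟩
        have hvxr : val i x ≤ val i r := hvmono i x r hxr hrm
        have hstep : val i s - val i x ≤ val i2 s - val i2 x := by
          rcases lt_or_eq_of_le hii2 with h | h
          · rcases lt_or_eq_of_le hxs with h2 | h2
            · exact hsc i i2 h x s h2 hs
            · rw [h2]; simp
          · rw [h]
        have hmono2 : val i2 s ≤ val i2 m := hvmono i2 s m hs le_rfl
        have hτk1 : val i2 m < tauF ε b (k+1) := by
          have hτ0m2 : (2:ℝ)^(-(b:ℤ)) ≤ val i2 m :=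
            ((hrange i2 m le_rfl).resolve_left (ne_of_gt hpos2)).1
          have h6 := lvlF_gt ε hε hτ0m2
          rwa [hlvl2] at h6
        have hτk : tauF ε b k ≤ val i m := by
          have := lvlF_le ε hε ((hrange i m le_rfl).resolve_left (ne_of_gt hpos_m)).1
          rwa [← hk] at this
        have e1 := tauF_succ ε b j
        have e2 := tauF_succ ε b k
        have hchain : val i s - val i r ≤ (ε/2) * tauF ε b j := by
          have := hxmem.2
          nlinarith [hvxr, hstep, hτj1, e1]
        have hτjb : tauF ε b j ≤ (1+ε/2) * val i m := by
          have h5 : (1+ε/2) * tauF ε b k ≤ (1+ε/2) * val i m :=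
            mul_le_mul_of_nonneg_left hτk (by linarith)
          linarith [hτj, hmono2, hτk1]
        have hfin : (ε/2) * tauF ε b j ≤ ε * val i m := by
          nlinarith [mul_le_mul_of_nonneg_left hτjb (by linarith : (0:ℝ) ≤ ε/2),
            mul_nonneg (mul_nonneg (by linarith : (0:ℝ) ≤ 2-ε) hε.le) (hvm0 i)]
        linarith
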